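/- Let γ≥2, μ>0 and let z, z':[0,∞)→ℂ be measurable with ‖z‖_{(γ)} < ∞ and ‖z'‖_{(γ)} < ∞. Let Θ and Θ' be asymptotic characteristics for z and z' respectively, with ‖Θ(t,ϑ,ω) − ϑ − ωt‖_{(γ−1)} < ∞ and ‖Θ'(t,ϑ,ω) − ϑ − ωt‖_{(γ−1)} < ∞, and define Γ(t,ϑ,ω) := ∫_t^∞ Im(e^{iΘ(s,ϑ,ω)} · conj(z(s))) ds and Γ'(t,ϑ,ω) := ∫_t^∞ Im(e^{iΘ'(s,ϑ,ω)} · conj(z'(s))) ds. There exists a constant C>0 depending only on γ such that if μC‖z'‖_{(γ)} < 1 then ‖Γ − Γ'‖_{(γ−1)} ≤ C‖z − z'‖_{(γ)} / (1 − μC‖z'‖_{(γ)}). -/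

import Mathlib

/-!
Write `D = Γ - Γ'` and `M = ‖D‖_{(γ-1)}`, finite since `μ Γ = Θ - ϑ - ω t`. The integrands of
`Γ` and `Γ'` differ by at most `|z - z'| + |Θ - Θ'| |z'|`, and `Θ - Θ' = μ D`, so the integrand
of `D` is bounded by `(‖z - z'‖_{(γ)} + μ M ‖z'‖_{(γ)}) ⟨s⟩^{-γ}`. Since
`⟨t⟩^{γ-1} ∫_t^∞ ⟨s⟩^{-γ} ds ≤ C := √2^γ / (γ - 1)`, this gives
`M ≤ C ‖z - z'‖_{(γ)} + μ C ‖z'‖_{(γ)} M`, and the last term is absorbed.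
-/

open MeasureTheory

noncomputable section

/-- The Japanese bracket `⟨t⟩ = (1+t²)^{1/2}`. -/
def jap (t : ℝ) : ℝ := Real.sqrt (1 + t ^ 2)

/-- Weighted sup-norm `sup_{t ≥ 0} |z t| ⟨t⟩^γ` for `z : ℝ → ℂ`. -/
def polyNormZ (γ : ℝ) (z : ℝ → ℂ) : ℝ :=
  ⨆ t : {t : ℝ // 0 ≤ t}, ‖z t.1‖ * jap t.1 ^ γ

/-- Finiteness of the weighted sup-norm for `z : ℝ → ℂ`. -/
def PolyBddZ (γ : ℝ) (z : ℝ → ℂ) : Prop :=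
  BddAbove (Set.range fun t : {t : ℝ // 0 ≤ t} => ‖z t.1‖ * jap t.1 ^ γ)

/-- Weighted sup-norm `sup_{t ≥ 0, ϑ, ω} |h t ϑ ω| ⟨t⟩^γ`. -/
def polyNormH (γ : ℝ) (h : ℝ → ℝ → ℝ → ℂ) : ℝ :=
  ⨆ p : {t : ℝ // 0 ≤ t} × ℝ × ℝ, ‖h p.1.1 p.2.1 p.2.2‖ * jap p.1.1 ^ γ

/-- Finiteness of the weighted sup-norm for `h`. -/
def PolyBddH (γ : ℝ) (h : ℝ → ℝ → ℝ → ℂ) : Prop :=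
  BddAbove (Set.range fun p : {t : ℝ // 0 ≤ t} × ℝ × ℝ =>
    ‖h p.1.1 p.2.1 p.2.2‖ * jap p.1.1 ^ γ)

/-- `Θ` is an asymptotic characteristic for the order parameter `z`, with coupling `μ`:
`Θ(t,ϑ,ω) = ϑ + ωt + μ ∫_t^∞ Im(e^{iΘ(s,ϑ,ω)} conj(z s)) ds` for all `t ≥ 0`. -/
def IsAsymChar (μ : ℝ) (z : ℝ → ℂ) (Θ : ℝ → ℝ → ℝ → ℝ) : Prop :=
  ∀ t : ℝ, 0 ≤ t → ∀ ϑ ω : ℝ,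
    Θ t ϑ ω = ϑ + ω * t + μ * ∫ s in Set.Ioi t,
      (Complex.exp (Complex.I * (Θ s ϑ ω : ℂ)) * (starRingEnd ℂ) (z s)).im

open Set Filter Topology

lemma continuousOn_setIntegral_Ioi (f : ℝ → ℝ) :
    ContinuousOn (fun t => ∫ s in Ioi t, f s) {t | IntegrableOn f (Ioi t)} := by
  intro t ht
  obtain ⟨c, hct, hc, hnhds⟩ : ∃ c ≤ t, IntegrableOn f (Ioi c) ∧
      Ici c ∈ 𝓝[{t | IntegrableOn f (Ioi t)}] t := by
    by_cases h : ∃ c < t, IntegrableOn f (Ioi c)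
    · obtain ⟨c, hct, hc⟩ := h
      exact ⟨c, hct.le, hc, mem_nhdsWithin_of_mem_nhds (Ici_mem_nhds hct)⟩
    · push Not at h
      exact ⟨t, le_rfl, ht, mem_of_superset self_mem_nhdsWithin
        fun s hs => not_lt.1 fun hst => h s hst hs⟩
  exact (hc.continuousOn_Ici_primitive_Ioi t hct).mono_of_mem_nhdsWithin hnhds

/-- The tail integral is continuous on the up-set where `f` is integrable on the tail, and is the
junk value `0` off it. -/
lemma measurable_setIntegral_Ioi (f : ℝ → ℝ) : Measurable fun t => ∫ s in Ioi t, f s := by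
  classical
  let A := {t | IntegrableOn f (Ioi t)}
  have hA : MeasurableSet A :=
    (IsUpperSet.ordConnected fun _ _ hst hs => hs.mono_set (Ioi_subset_Ioi hst)).measurableSet
  have hpiece : (fun t => ∫ s in Ioi t, f s) = A.piecewise (fun t => ∫ s in Ioi t, f s) 0 := by
    funext t
    by_cases ht : t ∈ A
    · simp [ht]
    · simp [ht, integral_undef ht]
  rw [hpiece]
  exact (continuousOn_setIntegral_Ioi f).measurable_piecewise continuousOn_const hA

lemma jap_pos (t : ℝ) : 0 < jap t := Real.sqrt_pos.2 (by positivity)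

lemma one_le_jap (t : ℝ) : 1 ≤ jap t := Real.one_le_sqrt.2 (by nlinarith)

lemma jap_le_one_add {t : ℝ} (ht : 0 ≤ t) : jap t ≤ 1 + t :=
  Real.sqrt_le_iff.2 ⟨by linarith, by nlinarith⟩

lemma one_add_le_sqrt_two_mul_jap (t : ℝ) : 1 + t ≤ √2 * jap t := by
  rw [jap, ← Real.sqrt_mul zero_le_two]
  exact Real.le_sqrt_of_sq_le (by nlinarith [sq_nonneg (1 - t)])

lemma jap_rpow_nonneg (t γ : ℝ) : 0 ≤ jap t ^ γ := Real.rpow_nonneg (jap_pos t).le γ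

lemma le_mul_jap_rpow_neg {a b t γ : ℝ} (h : a * jap t ^ γ ≤ b) : a ≤ b * jap t ^ (-γ) := by
  rwa [Real.rpow_neg (jap_pos t).le, ← div_eq_mul_inv,
    le_div_iff₀ (Real.rpow_pos_of_pos (jap_pos t) γ)]

lemma integrable_jap_rpow_neg {γ : ℝ} (hγ : 1 < γ) : Integrable fun s : ℝ => jap s ^ (-γ) := by
  have hjap : ∀ s : ℝ, jap s ^ (-γ) = (1 + ‖s‖ ^ 2) ^ (-γ / 2) := fun s => by
    rw [jap, Real.sqrt_eq_rpow, ← Real.rpow_mul (by positivity), Real.norm_eq_abs, sq_abs]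
    ring_nf
  simp_rw [hjap]
  exact integrable_rpow_neg_one_add_norm_sq (by simpa using hγ)

lemma setIntegral_Ioi_one_add_rpow_neg {γ t : ℝ} (hγ : 1 < γ) (ht : -1 < t) :
    ∫ s in Ioi t, (1 + s) ^ (-γ) = (1 + t) ^ (1 - γ) / (γ - 1) := by
  have hderiv : ∀ s ∈ Ici t,
      HasDerivAt (fun s => -(1 + s) ^ (1 - γ) / (γ - 1)) ((1 + s) ^ (-γ)) s := by
    intro s hs
    have hs' : (1 + s) ≠ 0 := by linarith [show t ≤ s from hs]
    refine ((((hasDerivAt_id s).const_add 1).rpow_const (p := 1 - γ)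
      (Or.inl hs')).neg.div_const (γ - 1)).congr_deriv ?_
    rw [id, show 1 - γ - 1 = -γ by ring]
    field_simp [show γ - 1 ≠ 0 by linarith]
    ring
  have hlim : Tendsto (fun s => -(1 + s) ^ (1 - γ) / (γ - 1)) atTop (𝓝 0) := by
    have := ((tendsto_rpow_neg_atTop (by linarith : 0 < γ - 1)).comp
      (tendsto_atTop_add_const_left atTop 1 tendsto_id)).neg.div_const (γ - 1)
    simpa [show -(γ - 1) = 1 - γ by ring] using this
  rw [integral_Ioi_of_hasDerivAt_of_nonneg' hderiv
    (fun s hs => Real.rpow_nonneg (by linarith [mem_Ioi.1 hs]) _) hlim]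
  ring

lemma jap_rpow_neg_le_sqrt_two_rpow_mul {γ : ℝ} (hγ : 0 ≤ γ) {s : ℝ} (hs : 0 ≤ s) :
    jap s ^ (-γ) ≤ √2 ^ γ * (1 + s) ^ (-γ) :=
  calc jap s ^ (-γ) = √2 ^ γ * (√2 * jap s) ^ (-γ) := by
        rw [Real.mul_rpow (by positivity) (jap_pos s).le, ← mul_assoc,
          ← Real.rpow_add (by positivity), add_neg_cancel, Real.rpow_zero, one_mul]
    _ ≤ √2 ^ γ * (1 + s) ^ (-γ) := by
        gcongr ?_ * ?_
        exact Real.rpow_le_rpow_of_nonpos (by positivity) (one_add_le_sqrt_two_mul_jap s)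
          (by linarith)

lemma integrableOn_Ioi_one_add_rpow_neg {γ t : ℝ} (hγ : 1 < γ) (ht : 0 ≤ t) :
    IntegrableOn (fun s : ℝ => (1 + s) ^ (-γ)) (Ioi t) := by
  refine (integrable_jap_rpow_neg hγ).integrableOn.mono'
    (by fun_prop : Measurable fun s : ℝ => (1 + s) ^ (-γ)).aestronglyMeasurable ?_
  filter_upwards [ae_restrict_mem measurableSet_Ioi] with s hs
  have hs0 : 0 ≤ s := ht.trans (le_of_lt hs)
  rw [Real.norm_of_nonneg (by positivity)]
  exact Real.rpow_le_rpow_of_nonpos (jap_pos s) (jap_le_one_add hs0) (by linarith)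

lemma setIntegral_Ioi_jap_rpow_neg_mul_le {γ t : ℝ} (hγ : 1 < γ) (ht : 0 ≤ t) :
    (∫ s in Ioi t, jap s ^ (-γ)) * jap t ^ (γ - 1) ≤ √2 ^ γ / (γ - 1) := by
  have hcmp : ∫ s in Ioi t, jap s ^ (-γ) ≤ √2 ^ γ * ((1 + t) ^ (1 - γ) / (γ - 1)) := by
    rw [← setIntegral_Ioi_one_add_rpow_neg hγ (by linarith), ← integral_const_mul]
    exact setIntegral_mono_on (integrable_jap_rpow_neg hγ).integrableOn
      ((integrableOn_Ioi_one_add_rpow_neg hγ ht).const_mul _) measurableSet_Ioi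
      fun s hs => jap_rpow_neg_le_sqrt_two_rpow_mul (by linarith) (ht.trans (le_of_lt hs))
  have hjap : jap t ^ (γ - 1) ≤ (1 + t) ^ (γ - 1) :=
    Real.rpow_le_rpow (jap_pos t).le (jap_le_one_add ht) (by linarith)
  calc (∫ s in Ioi t, jap s ^ (-γ)) * jap t ^ (γ - 1)
      ≤ √2 ^ γ * ((1 + t) ^ (1 - γ) / (γ - 1)) * (1 + t) ^ (γ - 1) := by
        gcongr
        exact jap_rpow_nonneg t (γ - 1)
    _ = √2 ^ γ / (γ - 1) := by
        rw [mul_div_assoc', div_mul_eq_mul_div, mul_assoc, ← Real.rpow_add (by linarith),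
          sub_add_sub_cancel', sub_self, Real.rpow_zero, mul_one]

lemma norm_le_polyNormZ_mul {γ s : ℝ} {w : ℝ → ℂ} (hw : PolyBddZ γ w) (hs : 0 ≤ s) :
    ‖w s‖ ≤ polyNormZ γ w * jap s ^ (-γ) :=
  le_mul_jap_rpow_neg (le_ciSup hw (⟨s, hs⟩ : {t : ℝ // 0 ≤ t}))

lemma norm_mul_le_polyNormH {γ t : ℝ} {h : ℝ → ℝ → ℝ → ℂ} (hh : PolyBddH γ h) (ht : 0 ≤ t)
    (ϑ ω : ℝ) : ‖h t ϑ ω‖ * jap t ^ γ ≤ polyNormH γ h :=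
  le_ciSup hh (⟨⟨t, ht⟩, ϑ, ω⟩ : {t : ℝ // 0 ≤ t} × ℝ × ℝ)

lemma polyNormZ_nonneg (γ : ℝ) (w : ℝ → ℂ) : 0 ≤ polyNormZ γ w :=
  Real.iSup_nonneg fun _ => mul_nonneg (norm_nonneg _) (jap_rpow_nonneg _ _)

lemma polyNormH_nonneg (γ : ℝ) (h : ℝ → ℝ → ℝ → ℂ) : 0 ≤ polyNormH γ h :=
  Real.iSup_nonneg fun _ => mul_nonneg (norm_nonneg _) (jap_rpow_nonneg _ _)

lemma polyNormH_le {γ C : ℝ} {h : ℝ → ℝ → ℝ → ℂ}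
    (hC : ∀ t, 0 ≤ t → ∀ ϑ ω, ‖h t ϑ ω‖ * jap t ^ γ ≤ C) : polyNormH γ h ≤ C :=
  haveI : Nonempty {t : ℝ // 0 ≤ t} := ⟨⟨0, le_rfl⟩⟩
  ciSup_le fun p => hC p.1.1 p.1.2 p.2.1 p.2.2

lemma PolyBddZ.sub {γ : ℝ} {z z' : ℝ → ℂ} (hz : PolyBddZ γ z) (hz' : PolyBddZ γ z') :
    PolyBddZ γ fun t => z t - z' t := by
  obtain ⟨b, hb⟩ := hz
  obtain ⟨b', hb'⟩ := hz'
  refine ⟨b + b', forall_mem_range.2 fun t => ?_⟩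
  calc ‖z t.1 - z' t.1‖ * jap t.1 ^ γ ≤ (‖z t.1‖ + ‖z' t.1‖) * jap t.1 ^ γ := by
        gcongr; exacts [jap_rpow_nonneg _ _, norm_sub_le _ _]
    _ ≤ b + b' := by
        rw [add_mul]
        exact add_le_add (hb (mem_range_self t)) (hb' (mem_range_self t))

lemma norm_cexp_I_mul_sub_cexp_I_mul_le (a b : ℝ) :
    ‖Complex.exp (Complex.I * a) - Complex.exp (Complex.I * b)‖ ≤ |a - b| := by
  have hfactor : Complex.exp (Complex.I * a) - Complex.exp (Complex.I * b) =
      Complex.exp (Complex.I * b) * (Complex.exp (Complex.I * ↑(a - b)) - 1) := by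
    rw [mul_sub, ← Complex.exp_add, mul_one]
    push_cast
    ring_nf
  rw [hfactor, norm_mul, Complex.norm_exp_I_mul_ofReal, one_mul, ← Real.norm_eq_abs]
  exact Real.norm_exp_I_mul_ofReal_sub_one_le

section InteractionIntegral

variable {γ μ : ℝ} {z z' : ℝ → ℂ} {Θ Θ' : ℝ → ℝ → ℝ → ℝ}

def interactionIntegrand (z : ℝ → ℂ) (Θ : ℝ → ℝ → ℝ → ℝ) (ϑ ω s : ℝ) : ℝ :=
  (Complex.exp (Complex.I * (Θ s ϑ ω : ℂ)) * (starRingEnd ℂ) (z s)).im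

/-- The paper's `Γ`. -/
def interactionIntegral (z : ℝ → ℂ) (Θ : ℝ → ℝ → ℝ → ℝ) (t ϑ ω : ℝ) : ℝ :=
  ∫ s in Ioi t, interactionIntegrand z Θ ϑ ω s

def interactionIntegralDiff (z : ℝ → ℂ) (Θ : ℝ → ℝ → ℝ → ℝ) (z' : ℝ → ℂ)
    (Θ' : ℝ → ℝ → ℝ → ℝ) (t ϑ ω : ℝ) : ℂ :=
  ((interactionIntegral z Θ t ϑ ω - interactionIntegral z' Θ' t ϑ ω : ℝ) : ℂ)

lemma abs_interactionIntegrand_le (z : ℝ → ℂ) (Θ : ℝ → ℝ → ℝ → ℝ) (ϑ ω s : ℝ) :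
    |interactionIntegrand z Θ ϑ ω s| ≤ ‖z s‖ := by
  refine (Complex.abs_im_le_norm _).trans_eq ?_
  rw [norm_mul, Complex.norm_exp_I_mul_ofReal, one_mul, Complex.norm_conj]

lemma abs_interactionIntegrand_sub_le (ϑ ω s : ℝ) :
    |interactionIntegrand z Θ ϑ ω s - interactionIntegrand z' Θ' ϑ ω s| ≤
      ‖z s - z' s‖ + |Θ s ϑ ω - Θ' s ϑ ω| * ‖z' s‖ := by
  set e := Complex.exp (Complex.I * (Θ s ϑ ω : ℂ))
  set e' := Complex.exp (Complex.I * (Θ' s ϑ ω : ℂ))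
  have hsplit : e * (starRingEnd ℂ) (z s) - e' * (starRingEnd ℂ) (z' s) =
      e * (starRingEnd ℂ) (z s - z' s) + (e - e') * (starRingEnd ℂ) (z' s) := by
    rw [map_sub]; ring
  calc |interactionIntegrand z Θ ϑ ω s - interactionIntegrand z' Θ' ϑ ω s|
      = |(e * (starRingEnd ℂ) (z s) - e' * (starRingEnd ℂ) (z' s)).im| := by
        rw [Complex.sub_im]; rfl
    _ ≤ ‖e * (starRingEnd ℂ) (z s - z' s) + (e - e') * (starRingEnd ℂ) (z' s)‖ := by
        rw [← hsplit]; exact Complex.abs_im_le_norm _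
    _ ≤ ‖z s - z' s‖ + |Θ s ϑ ω - Θ' s ϑ ω| * ‖z' s‖ := by
        refine (norm_add_le _ _).trans ?_
        rw [norm_mul, norm_mul, Complex.norm_exp_I_mul_ofReal, one_mul, Complex.norm_conj,
          Complex.norm_conj]
        gcongr
        exact norm_cexp_I_mul_sub_cexp_I_mul_le _ _

lemma IsAsymChar.mul_interactionIntegral (hΘ : IsAsymChar μ z Θ) {t : ℝ} (ht : 0 ≤ t)
    (ϑ ω : ℝ) : μ * interactionIntegral z Θ t ϑ ω = Θ t ϑ ω - ϑ - ω * t := by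
  rw [hΘ t ht ϑ ω]
  simp only [interactionIntegral, interactionIntegrand]
  ring

/-- The integrand is measurable because the fixed-point equation expresses `Θ` through a tail
integral, which is measurable by `measurable_setIntegral_Ioi`. -/
lemma IsAsymChar.integrableOn (hγ : 1 < γ) (hz : Measurable z) (hbz : PolyBddZ γ z)
    (hΘ : IsAsymChar μ z Θ) (ϑ ω : ℝ) {t : ℝ} (ht : 0 ≤ t) :
    IntegrableOn (interactionIntegrand z Θ ϑ ω) (Ioi t) := by
  have hG : Measurable fun s => (Complex.exp (Complex.I *
      ((ϑ + ω * s + μ * interactionIntegral z Θ s ϑ ω : ℝ) : ℂ)) * (starRingEnd ℂ) (z s)).im := by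
    have := measurable_setIntegral_Ioi (interactionIntegrand z Θ ϑ ω)
    unfold interactionIntegral
    fun_prop
  refine ((integrable_jap_rpow_neg hγ).const_mul (polyNormZ γ z)).integrableOn.mono' ?_ ?_
  · refine hG.aestronglyMeasurable.restrict.congr ?_
    filter_upwards [ae_restrict_mem measurableSet_Ioi] with s hs
    dsimp only [interactionIntegrand]
    rw [hΘ s (ht.trans (le_of_lt hs)) ϑ ω]
    rfl
  · filter_upwards [ae_restrict_mem measurableSet_Ioi] with s hs
    exact (abs_interactionIntegrand_le z Θ ϑ ω s).trans
      (norm_le_polyNormZ_mul hbz (ht.trans (le_of_lt hs)))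

lemma IsAsymChar.polyBddH_interactionIntegralDiff (hμ : 0 < μ) (hΘ : IsAsymChar μ z Θ)
    (hΘ' : IsAsymChar μ z' Θ')
    (hb : PolyBddH γ fun t ϑ ω => ((Θ t ϑ ω - ϑ - ω * t : ℝ) : ℂ))
    (hb' : PolyBddH γ fun t ϑ ω => ((Θ' t ϑ ω - ϑ - ω * t : ℝ) : ℂ)) :
    PolyBddH γ (interactionIntegralDiff z Θ z' Θ') := by
  obtain ⟨b, hb⟩ := hb
  obtain ⟨b', hb'⟩ := hb'
  refine ⟨(b + b') / μ, forall_mem_range.2 fun ⟨⟨t, ht⟩, ϑ, ω⟩ => ?_⟩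
  have h := hb (mem_range_self ⟨⟨t, ht⟩, ϑ, ω⟩)
  have h' := hb' (mem_range_self ⟨⟨t, ht⟩, ϑ, ω⟩)
  simp only [interactionIntegralDiff, Complex.norm_real, Real.norm_eq_abs] at h h' ⊢
  rw [le_div_iff₀ hμ]
  calc |interactionIntegral z Θ t ϑ ω - interactionIntegral z' Θ' t ϑ ω| * jap t ^ γ * μ
      = |(Θ t ϑ ω - ϑ - ω * t) - (Θ' t ϑ ω - ϑ - ω * t)| * jap t ^ γ := by
        rw [← hΘ.mul_interactionIntegral ht, ← hΘ'.mul_interactionIntegral ht, ← mul_sub,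
          abs_mul, abs_of_pos hμ]
        ring
    _ ≤ (|Θ t ϑ ω - ϑ - ω * t| + |Θ' t ϑ ω - ϑ - ω * t|) * jap t ^ γ := by
        gcongr
        exacts [jap_rpow_nonneg _ _, abs_sub _ _]
    _ ≤ b + b' := by rw [add_mul]; exact add_le_add h h'

lemma abs_interactionIntegrand_sub_le_mul_jap_rpow_neg (hγ : 1 ≤ γ) (hμ : 0 ≤ μ)
    (hbd : PolyBddZ γ fun s => z s - z' s) (hbz' : PolyBddZ γ z')
    (hΘ : IsAsymChar μ z Θ) (hΘ' : IsAsymChar μ z' Θ')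
    (hD : PolyBddH (γ - 1) (interactionIntegralDiff z Θ z' Θ')) (ϑ ω : ℝ) {s : ℝ} (hs : 0 ≤ s) :
    |interactionIntegrand z Θ ϑ ω s - interactionIntegrand z' Θ' ϑ ω s| ≤
      (polyNormZ γ (fun s => z s - z' s) +
        μ * polyNormH (γ - 1) (interactionIntegralDiff z Θ z' Θ') * polyNormZ γ z') *
        jap s ^ (-γ) := by
  set M := polyNormH (γ - 1) (interactionIntegralDiff z Θ z' Θ')
  have hM : 0 ≤ M := polyNormH_nonneg _ _
  have hΘs : |Θ s ϑ ω - Θ' s ϑ ω| ≤ μ * M := by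
    have hdiff : Θ s ϑ ω - Θ' s ϑ ω =
        μ * (interactionIntegral z Θ s ϑ ω - interactionIntegral z' Θ' s ϑ ω) := by
      rw [mul_sub, hΘ.mul_interactionIntegral hs, hΘ'.mul_interactionIntegral hs]
      ring
    have hDs : |interactionIntegral z Θ s ϑ ω - interactionIntegral z' Θ' s ϑ ω| ≤
        M * jap s ^ (-(γ - 1)) :=
      le_mul_jap_rpow_neg (by
        simpa only [interactionIntegralDiff, Complex.norm_real, Real.norm_eq_abs] using
          norm_mul_le_polyNormH hD hs ϑ ω)
    rw [hdiff, abs_mul, abs_of_nonneg hμ]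
    gcongr
    calc _ ≤ M * jap s ^ (-(γ - 1)) := hDs
      _ ≤ M := mul_le_of_le_one_right hM
        (Real.rpow_le_one_of_one_le_of_nonpos (one_le_jap s) (by linarith))
  calc |interactionIntegrand z Θ ϑ ω s - interactionIntegrand z' Θ' ϑ ω s|
      ≤ ‖z s - z' s‖ + |Θ s ϑ ω - Θ' s ϑ ω| * ‖z' s‖ := abs_interactionIntegrand_sub_le ϑ ω s
    _ ≤ polyNormZ γ (fun s => z s - z' s) * jap s ^ (-γ) +
        μ * M * (polyNormZ γ z' * jap s ^ (-γ)) :=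
      add_le_add (norm_le_polyNormZ_mul hbd hs)
        (mul_le_mul hΘs (norm_le_polyNormZ_mul hbz' hs) (norm_nonneg _) (by positivity))
    _ = _ := by ring

lemma norm_interactionIntegralDiff_mul_le (hγ : 1 < γ) (hμ : 0 ≤ μ)
    (hz : Measurable z) (hz' : Measurable z') (hbz : PolyBddZ γ z) (hbz' : PolyBddZ γ z')
    (hΘ : IsAsymChar μ z Θ) (hΘ' : IsAsymChar μ z' Θ')
    (hD : PolyBddH (γ - 1) (interactionIntegralDiff z Θ z' Θ')) (ϑ ω : ℝ) {t : ℝ} (ht : 0 ≤ t) :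
    ‖interactionIntegralDiff z Θ z' Θ' t ϑ ω‖ * jap t ^ (γ - 1) ≤
      √2 ^ γ / (γ - 1) * (polyNormZ γ (fun s => z s - z' s) +
        μ * polyNormH (γ - 1) (interactionIntegralDiff z Θ z' Θ') * polyNormZ γ z') := by
  set K := polyNormZ γ (fun s => z s - z' s) +
    μ * polyNormH (γ - 1) (interactionIntegralDiff z Θ z' Θ') * polyNormZ γ z'
  have hK : 0 ≤ K := add_nonneg (polyNormZ_nonneg _ _)
    (mul_nonneg (mul_nonneg hμ (polyNormH_nonneg _ _)) (polyNormZ_nonneg _ _))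
  have hint : |interactionIntegral z Θ t ϑ ω - interactionIntegral z' Θ' t ϑ ω| ≤
      K * ∫ s in Ioi t, jap s ^ (-γ) := by
    rw [interactionIntegral, interactionIntegral, ← integral_sub (hΘ.integrableOn hγ hz hbz ϑ ω ht)
      (hΘ'.integrableOn hγ hz' hbz' ϑ ω ht), ← integral_const_mul, ← Real.norm_eq_abs]
    refine norm_integral_le_of_norm_le ((integrable_jap_rpow_neg hγ).integrableOn.const_mul K) ?_
    filter_upwards [ae_restrict_mem measurableSet_Ioi] with s hs
    exact abs_interactionIntegrand_sub_le_mul_jap_rpow_neg hγ.le hμ (hbz.sub hbz') hbz' hΘ hΘ' hD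
      ϑ ω (ht.trans (le_of_lt hs))
  calc ‖interactionIntegralDiff z Θ z' Θ' t ϑ ω‖ * jap t ^ (γ - 1)
      = |interactionIntegral z Θ t ϑ ω - interactionIntegral z' Θ' t ϑ ω| * jap t ^ (γ - 1) := by
        rw [interactionIntegralDiff, Complex.norm_real, Real.norm_eq_abs]
    _ ≤ K * ((∫ s in Ioi t, jap s ^ (-γ)) * jap t ^ (γ - 1)) := by
        rw [← mul_assoc]
        exact mul_le_mul_of_nonneg_right hint (jap_rpow_nonneg _ _)
    _ ≤ K * (√2 ^ γ / (γ - 1)) := by gcongr; exact setIntegral_Ioi_jap_rpow_neg_mul_le hγ ht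
    _ = √2 ^ γ / (γ - 1) * K := mul_comm _ _

end InteractionIntegral

/-- Estimate for the difference of the integrated interaction terms
(Lemma 6 of the paper). -/
theorem GammaDiff_bound_poly
    (γ : ℝ) (hγ : 2 ≤ γ) :
    ∃ C > (0 : ℝ), ∀ μ : ℝ, 0 < μ → ∀ z z' : ℝ → ℂ,
      Measurable z → Measurable z' → PolyBddZ γ z → PolyBddZ γ z' →
      ∀ Θ Θ' : ℝ → ℝ → ℝ → ℝ, IsAsymChar μ z Θ → IsAsymChar μ z' Θ' →
        PolyBddH (γ - 1) (fun t ϑ ω => ((Θ t ϑ ω - ϑ - ω * t : ℝ) : ℂ)) →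
        PolyBddH (γ - 1) (fun t ϑ ω => ((Θ' t ϑ ω - ϑ - ω * t : ℝ) : ℂ)) →
        μ * C * polyNormZ γ z' < 1 →
        polyNormH (γ - 1) (fun t ϑ ω =>
            (((∫ s in Set.Ioi t,
                (Complex.exp (Complex.I * (Θ s ϑ ω : ℂ)) * (starRingEnd ℂ) (z s)).im) -
              (∫ s in Set.Ioi t,
                (Complex.exp (Complex.I * (Θ' s ϑ ω : ℂ)) * (starRingEnd ℂ) (z' s)).im) :
              ℝ) : ℂ)) ≤
          C * polyNormZ γ (fun t => z t - z' t) / (1 - μ * C * polyNormZ γ z') := by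
  refine ⟨√2 ^ γ / (γ - 1), div_pos (by positivity) (by linarith), ?_⟩
  intro μ hμ z z' hz hz' hbz hbz' Θ Θ' hΘ hΘ' hbΘ hbΘ' hsmall
  change polyNormH (γ - 1) (interactionIntegralDiff z Θ z' Θ') ≤ _
  have hD := hΘ.polyBddH_interactionIntegralDiff hμ hΘ' hbΘ hbΘ'
  have hM := polyNormH_le fun t ht ϑ ω => norm_interactionIntegralDiff_mul_le (by linarith)
    hμ.le hz hz' hbz hbz' hΘ hΘ' hD ϑ ω ht
  rw [le_div_iff₀ (by linarith)]
  linarith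

end
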